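/- Let r and k be positive integers and let B be a finite nonempty simple graph with rk_r(B) = k+1 that is minimal with this property, i.e., every nonempty proper induced subgraph of B has r-splitter rank at most k. Then there exists a vertex c of B such that N_r[c] = V(B), i.e., every vertex of B is at distance at most r from c. -/

import Mathlib

open Classical

/-- The closed `r`-neighborhood of `c` inside the induced subgraph `G[A]`:
all vertices of `A` joined to `c` by a walk of length at most `r` staying in `A`. -/
noncomputable def ball {V : Type*} (G : SimpleGraph V) (r : ℕ) (A : Finset V) (c : V) :
    Finset V :=
  A.filter (fun v => ∃ p : G.Walk c v, p.length ≤ r ∧ ∀ x ∈ p.support, x ∈ A)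

/-- The `r`-splitter rank of the induced subgraph `G[A]` (with `rank ∅ = 0`). -/
noncomputable def splitterRank {V : Type*} [DecidableEq V] (G : SimpleGraph V) (r : ℕ)
    (A : Finset V) : ℕ :=
  if _ : A.Nonempty then
    1 + A.attach.sup (fun c =>
      (ball G r A c.1).attach.inf'
        (Finset.attach_nonempty_iff.2 ⟨c.1, Finset.mem_filter.2 ⟨c.2,
          SimpleGraph.Walk.nil, by simp, by simp [c.2]⟩⟩)
        (fun s => splitterRank G r ((ball G r A c.1).erase s.1)))
  else 0
termination_by A.card
decreasing_by
  exact lt_of_lt_of_le (Finset.card_erase_lt_of_mem s.2)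
    (Finset.card_le_card (Finset.filter_subset _ _))

section Ball

variable {V : Type*} (G : SimpleGraph V) (r : ℕ) {A : Finset V} {c : V}

lemma mem_ball_self (hc : c ∈ A) : c ∈ ball G r A c :=
  Finset.mem_filter.2 ⟨hc, SimpleGraph.Walk.nil, by simp, by simp [hc]⟩

-- Every prefix of a walk of length `≤ r` from `c` inside `A` witnesses membership in the ball.
lemma ball_ball (A : Finset V) (c : V) : ball G r (ball G r A c) c = ball G r A c := by
  refine Finset.Subset.antisymm (Finset.filter_subset _ _) fun v hv => ?_
  obtain ⟨-, p, hp, hpA⟩ := Finset.mem_filter.1 hv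
  refine Finset.mem_filter.2 ⟨hv, p, hp, fun x hx => ?_⟩
  exact Finset.mem_filter.2 ⟨hpA x hx, p.takeUntil x hx,
    (p.length_takeUntil_le_length hx).trans hp,
    fun y hy => hpA y (p.support_takeUntil_subset_support hx hy)⟩

end Ball

section SplitterRank

variable {V : Type*} [DecidableEq V] (G : SimpleGraph V) (r : ℕ) {A : Finset V} {n : ℕ}

lemma exists_center_of_splitterRank_eq_succ (h : splitterRank G r A = n + 1) :
    ∃ c ∈ A, ∀ s ∈ ball G r A c, n ≤ splitterRank G r ((ball G r A c).erase s) := by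
  have hA : A.Nonempty := by
    by_contra hA
    rw [splitterRank, dif_neg hA] at h
    omega
  rw [splitterRank, dif_pos hA] at h
  obtain ⟨c, -, hc⟩ := Finset.exists_mem_eq_sup A.attach (Finset.attach_nonempty_iff.2 hA)
    fun c => (ball G r A c.1).attach.inf' (Finset.attach_nonempty_iff.2 ⟨c, mem_ball_self G r c.2⟩)
      fun s => splitterRank G r ((ball G r A c.1).erase s.1)
  rw [hc] at h
  refine ⟨c.1, c.2, fun s hs => ?_⟩
  have := Finset.inf'_le (fun t : ball G r A c => splitterRank G r ((ball G r A c).erase t.1))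
    (Finset.mem_attach _ ⟨s, hs⟩)
  exact le_of_eq_of_le (by omega) this

lemma succ_le_splitterRank_of_mem (hc : c ∈ A)
    (h : ∀ s ∈ ball G r A c, n ≤ splitterRank G r ((ball G r A c).erase s)) :
    n + 1 ≤ splitterRank G r A := by
  rw [splitterRank, dif_pos ⟨c, hc⟩, add_comm]
  gcongr
  refine le_trans ?_ (Finset.le_sup (Finset.mem_attach _ ⟨c, hc⟩))
  exact Finset.le_inf' _ _ fun s _ => h s.1 s.2

end SplitterRank

theorem minimal_has_center_general {V : Type*} [Fintype V] [DecidableEq V]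
    (G : SimpleGraph V) (r k : ℕ)
    (hrk : splitterRank G r Finset.univ = k + 1)
    (hmin : ∀ A : Finset V, A.Nonempty → A ⊂ Finset.univ → splitterRank G r A ≤ k) :
    ∃ c : V, ball G r Finset.univ c = Finset.univ := by
  obtain ⟨c, -, hc⟩ := exists_center_of_splitterRank_eq_succ G r hrk
  refine ⟨c, ?_⟩
  by_contra hne
  set B := ball G r Finset.univ c
  have hcB : c ∈ B := mem_ball_self G r (Finset.mem_univ c)
  -- The ball around `c` inside `B` is all of `B`, so `c` splits `B` as well as it splits `V`.
  have hrankB : k + 1 ≤ splitterRank G r B :=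
    succ_le_splitterRank_of_mem G r hcB (by rwa [ball_ball])
  have := hmin B ⟨c, hcB⟩ (Finset.ssubset_univ_iff.2 hne)
  omega

/-- A minimal graph of `r`-splitter rank `k+1` has a central vertex `c` with
`N_r[c] = V(B)`. -/
theorem minimal_has_center {V : Type*} [Fintype V] [DecidableEq V] [Nonempty V]
    (G : SimpleGraph V) (r k : ℕ) (hr : 0 < r) (hk : 0 < k)
    (hrk : splitterRank G r Finset.univ = k + 1)
    (hmin : ∀ A : Finset V, A.Nonempty → A ⊂ Finset.univ → splitterRank G r A ≤ k) :
    ∃ c : V, ball G r Finset.univ c = Finset.univ :=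
  minimal_has_center_general G r k hrk hmin
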